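/- For a stationary Markov chain (π invariant under p) on a finite state space with all transition probabilities positive, the expected path-space log-likelihood ratio between the chain and its time reversal equals N times the per-step entropy production: E_P[log(P/P^R)] = N · Σ_{a,b} π(a) p(b|a) log( (π(a)p(b|a)) / (π(b)p(a|b)) ), and this quantity is nonnegative. -/

import Mathlib

open Finset Real

noncomputable def KL {Z : Type*} [Fintype Z] (P Q : Z → ℝ) : ℝ :=
  ∑ z, P z * Real.log (P z / Q z)

noncomputable def pathP {S : Type*} (pinit : S → ℝ) (p : S → S → ℝ) (N : ℕ)
    (s : Fin (N + 1) → S) : ℝ :=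
  pinit (s 0) * ∏ i : Fin N, p (s i.succ) (s i.castSucc)

lemma pathP_cons {S : Type*} (pinit : S → ℝ) (p : S → S → ℝ) (N : ℕ) (a : S)
    (r : Fin (N+1) → S) :
    pathP pinit p (N+1) (Fin.cons a r) = pinit a * pathP (fun b => p b a) p N r := by
  unfold pathP
  rw [Fin.prod_univ_succ]
  simp [← Fin.succ_castSucc]

lemma sum_fun_succ {S : Type*} [Fintype S] (N : ℕ) (F : (Fin (N+2) → S) → ℝ) :
    ∑ s, F s = ∑ a, ∑ r : Fin (N+1) → S, F (Fin.cons a r) := by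
  rw [← Equiv.sum_comp (Fin.consEquiv (fun _ => S)) F, Fintype.sum_prod_type]
  rfl

lemma pathP_mass {S : Type*} [Fintype S] (p : S → S → ℝ) (hstoch : ∀ a, ∑ b, p b a = 1) :
    ∀ (N : ℕ) (q : S → ℝ),
      ∑ s : Fin (N+1) → S, pathP q p N s = ∑ a, q a := by
  intro N
  induction N with
  | zero =>
    intro q
    rw [← Equiv.sum_comp (Equiv.funUnique (Fin 1) S).symm]
    simp [pathP]
  | succ N ih =>
    intro q
    rw [sum_fun_succ N (fun s => pathP q p (N+1) s)]
    have : ∀ a, ∑ r : Fin (N+1) → S, pathP q p (N+1) (Fin.cons a r) = q a := by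
      intro a
      simp only [pathP_cons, ← Finset.mul_sum, ih (fun b => p b a), hstoch a, mul_one]
    simp [this]

lemma marg0 {S : Type*} [Fintype S] (p : S → S → ℝ) (hstoch : ∀ a, ∑ b, p b a = 1)
    (N : ℕ) (q h : S → ℝ) :
    ∑ s : Fin (N+1) → S, pathP q p N s * h (s 0) = ∑ a, q a * h a := by
  have : ∀ s : Fin (N+1) → S, pathP q p N s * h (s 0) = pathP (fun a => q a * h a) p N s := by
    intro s; unfold pathP; ring
  rw [Finset.sum_congr rfl (fun s _ => this s), pathP_mass p hstoch]

lemma pathP_mix {S : Type*} [Fintype S] (pinit : S → ℝ) (p : S → S → ℝ)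
    (hinv : ∀ b, ∑ a, pinit a * p b a = pinit b) (N : ℕ) (r : Fin (N+1) → S) :
    ∑ a, pinit a * pathP (fun b => p b a) p N r = pathP pinit p N r := by
  unfold pathP
  simp only [← mul_assoc]
  rw [← Finset.sum_mul, hinv]

lemma marg_pair {S : Type*} [Fintype S] (pinit : S → ℝ) (p : S → S → ℝ)
    (hstoch : ∀ a, ∑ b, p b a = 1)
    (hinv : ∀ b, ∑ a, pinit a * p b a = pinit b) :
    ∀ (N : ℕ) (i : Fin N) (g : S → S → ℝ),
      ∑ s : Fin (N+1) → S, pathP pinit p N s * g (s i.castSucc) (s i.succ)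
        = ∑ a, ∑ b, pinit a * p b a * g a b := by
  intro N
  induction N with
  | zero => exact fun i => i.elim0
  | succ N ih =>
    intro i g
    induction i using Fin.cases with
    | zero =>
      rw [sum_fun_succ N (fun s => pathP pinit p (N+1) s *
        g (s (0 : Fin (N+1)).castSucc) (s (0 : Fin (N+1)).succ))]
      have key : ∀ a, ∑ r : Fin (N+1) → S,
          pathP pinit p (N+1) (Fin.cons a r) *
            g ((Fin.cons a r : Fin (N+2) → S) (0 : Fin (N+1)).castSucc)
              ((Fin.cons a r : Fin (N+2) → S) (0 : Fin (N+1)).succ)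
          = ∑ b, pinit a * p b a * g a b := by
        intro a
        have h1 : ∀ r : Fin (N+1) → S,
            pathP pinit p (N+1) (Fin.cons a r) *
              g ((Fin.cons a r : Fin (N+2) → S) (0 : Fin (N+1)).castSucc)
                ((Fin.cons a r : Fin (N+2) → S) (0 : Fin (N+1)).succ)
            = pinit a * (pathP (fun b => p b a) p N r * g a (r 0)) := by
          intro r
          rw [pathP_cons]
          simp only [Fin.castSucc_zero, Fin.cons_zero, Fin.cons_succ]
          ring
        rw [Finset.sum_congr rfl (fun r _ => h1 r), ← Finset.mul_sum,
          marg0 p hstoch N (fun b => p b a) (g a), Finset.mul_sum]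
        exact Finset.sum_congr rfl fun b _ => by ring
      exact Finset.sum_congr rfl fun a _ => key a
    | succ j =>
      rw [sum_fun_succ N (fun s => pathP pinit p (N+1) s *
        g (s j.succ.castSucc) (s j.succ.succ))]
      have h1 : ∀ a (r : Fin (N+1) → S),
          pathP pinit p (N+1) (Fin.cons a r) *
            g ((Fin.cons a r : Fin (N+2) → S) j.succ.castSucc)
              ((Fin.cons a r : Fin (N+2) → S) j.succ.succ)
          = pinit a * pathP (fun b => p b a) p N r *
              g (r j.castSucc) (r j.succ) := by
        intro a r
        rw [pathP_cons, ← Fin.succ_castSucc]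
        simp only [Fin.cons_succ]
      calc ∑ a, ∑ r : Fin (N+1) → S, pathP pinit p (N+1) (Fin.cons a r) *
            g ((Fin.cons a r : Fin (N+2) → S) j.succ.castSucc)
              ((Fin.cons a r : Fin (N+2) → S) j.succ.succ)
          = ∑ r : Fin (N+1) → S, (∑ a, pinit a * pathP (fun b => p b a) p N r) *
              g (r j.castSucc) (r j.succ) := by
            rw [Finset.sum_comm]
            exact Finset.sum_congr rfl fun r _ => by
              rw [Finset.sum_mul]
              exact Finset.sum_congr rfl fun a _ => h1 a r
        _ = ∑ a, ∑ b, pinit a * p b a * g a b := by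
            simp only [pathP_mix pinit p hinv N]
            exact ih j g

lemma tel : ∀ (N : ℕ) (g : Fin (N+1) → ℝ),
    ∑ i : Fin N, (g i.castSucc - g i.succ) = g 0 - g (Fin.last N) := by
  intro N
  induction N with
  | zero => intro g; simp [Fin.last]
  | succ N ih =>
    intro g
    rw [Fin.sum_univ_succ]
    have : ∑ i : Fin N, (g i.succ.castSucc - g i.succ.succ)
        = g (Fin.succ 0) - g (Fin.last (N+1)) := by
      have := ih (fun j => g j.succ)
      simp only [Fin.succ_castSucc] at this ⊢
      rw [this, Fin.succ_last]
    rw [this]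
    simp

lemma pathP_rev {S : Type*} [Fintype S] (pinit : S → ℝ) (p : S → S → ℝ) (N : ℕ)
    (s : Fin (N+1) → S) :
    pathP pinit p N (fun i => s i.rev)
      = pinit (s (Fin.last N)) * ∏ i : Fin N, p (s i.castSucc) (s i.succ) := by
  unfold pathP
  simp only [Fin.rev_succ, Fin.rev_castSucc, Fin.rev_zero]
  congr 1
  exact Equiv.prod_comp Fin.revPerm (fun j => p (s j.castSucc) (s j.succ))

lemma log_ratio {S : Type*} [Fintype S] (pinit : S → ℝ) (p : S → S → ℝ) (N : ℕ)
    (hp : ∀ a b, 0 < p b a) (hπpos : ∀ a, 0 < pinit a) (s : Fin (N+1) → S) :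
    Real.log (pathP pinit p N s / pathP pinit p N (fun i => s i.rev))
      = ∑ i : Fin N, Real.log ((pinit (s i.castSucc) * p (s i.succ) (s i.castSucc))
          / (pinit (s i.succ) * p (s i.castSucc) (s i.succ))) := by
  rw [pathP_rev]
  unfold pathP
  have hprod1 : (0:ℝ) < ∏ i : Fin N, p (s i.succ) (s i.castSucc) :=
    Finset.prod_pos fun i _ => hp _ _
  have hprod2 : (0:ℝ) < ∏ i : Fin N, p (s i.castSucc) (s i.succ) :=
    Finset.prod_pos fun i _ => hp _ _
  rw [Real.log_div (mul_pos (hπpos _) hprod1).ne' (mul_pos (hπpos _) hprod2).ne',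
    Real.log_mul (hπpos _).ne' hprod1.ne',
    Real.log_mul (hπpos _).ne' hprod2.ne',
    Real.log_prod (fun i _ => (hp _ _).ne'),
    Real.log_prod (fun i _ => (hp _ _).ne')]
  have hterm : ∀ i : Fin N,
      Real.log ((pinit (s i.castSucc) * p (s i.succ) (s i.castSucc))
          / (pinit (s i.succ) * p (s i.castSucc) (s i.succ)))
        = (Real.log (pinit (s i.castSucc)) - Real.log (pinit (s i.succ)))
          + (Real.log (p (s i.succ) (s i.castSucc)) - Real.log (p (s i.castSucc) (s i.succ))) := by
    intro i
    rw [Real.log_div (mul_pos (hπpos _) (hp _ _)).ne' (mul_pos (hπpos _) (hp _ _)).ne',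
      Real.log_mul (hπpos _).ne' (hp _ _).ne',
      Real.log_mul (hπpos _).ne' (hp _ _).ne']
    ring
  rw [Finset.sum_congr rfl (fun i _ => hterm i), Finset.sum_add_distrib,
    tel N (fun j => Real.log (pinit (s j))), Finset.sum_sub_distrib]
  ring

lemma pathP_pos {S : Type*} [Fintype S] (pinit : S → ℝ) (p : S → S → ℝ) (N : ℕ)
    (hp : ∀ a b, 0 < p b a) (hπpos : ∀ a, 0 < pinit a) (s : Fin (N+1) → S) :
    0 < pathP pinit p N s :=
  mul_pos (hπpos _) (Finset.prod_pos fun i _ => hp _ _)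

theorem stationary_entropy_production {S : Type*} [Fintype S]
    (pinit : S → ℝ) (p : S → S → ℝ) (N : ℕ)
    (hp : ∀ a b, 0 < p b a) (hstoch : ∀ a, ∑ b, p b a = 1)
    (hπpos : ∀ a, 0 < pinit a) (hπ1 : ∑ a, pinit a = 1)
    (hinv : ∀ b, ∑ a, pinit a * p b a = pinit b) :
    KL (pathP pinit p N) (fun s => pathP pinit p N (fun i => s i.rev)) =
      (N : ℝ) *
        ∑ a, ∑ b, pinit a * p b a *
          Real.log ((pinit a * p b a) / (pinit b * p a b)) ∧
    0 ≤ KL (pathP pinit p N) (fun s => pathP pinit p N (fun i => s i.rev)) := by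
  set P := pathP pinit p N with hP
  set Q : (Fin (N+1) → S) → ℝ := fun s => pathP pinit p N (fun i => s i.rev) with hQ
  have hPpos : ∀ s, 0 < P s := pathP_pos pinit p N hp hπpos
  have hQpos : ∀ s, 0 < Q s := fun s => pathP_pos pinit p N hp hπpos _
  constructor
  · show ∑ s, P s * Real.log (P s / Q s) = _
    have h1 : ∀ s : Fin (N+1) → S, P s * Real.log (P s / Q s)
        = ∑ i : Fin N, P s * Real.log ((pinit (s i.castSucc) * p (s i.succ) (s i.castSucc))
            / (pinit (s i.succ) * p (s i.castSucc) (s i.succ))) := by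
      intro s
      rw [hP, hQ]
      simp only
      rw [log_ratio pinit p N hp hπpos s, Finset.mul_sum]
    rw [Finset.sum_congr rfl (fun s _ => h1 s), Finset.sum_comm]
    have h2 : ∀ i : Fin N,
        ∑ s : Fin (N+1) → S, P s * Real.log ((pinit (s i.castSucc) * p (s i.succ) (s i.castSucc))
            / (pinit (s i.succ) * p (s i.castSucc) (s i.succ)))
          = ∑ a, ∑ b, pinit a * p b a *
              Real.log ((pinit a * p b a) / (pinit b * p a b)) :=
      fun i => marg_pair pinit p hstoch hinv N i
        (fun a b => Real.log ((pinit a * p b a) / (pinit b * p a b)))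
    rw [Finset.sum_congr rfl (fun i _ => h2 i), Finset.sum_const, Finset.card_univ,
      Fintype.card_fin, nsmul_eq_mul]
  · have sumP : ∑ s, P s = 1 := by rw [hP, pathP_mass p hstoch N pinit, hπ1]
    have sumQ : ∑ s, Q s = 1 := by
      have hb : Function.Bijective
          (fun (s : Fin (N+1) → S) => (fun i => s i.rev : Fin (N+1) → S)) :=
        Function.Involutive.bijective (fun s => funext fun i => by simp [Fin.rev_rev])
      rw [Fintype.sum_bijective _ hb Q P (fun s => rfl), sumP]
    have key : ∀ s : Fin (N+1) → S, P s - Q s ≤ P s * Real.log (P s / Q s) := by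
      intro s
      have h1 : Real.log (Q s / P s) ≤ Q s / P s - 1 :=
        Real.log_le_sub_one_of_pos (div_pos (hQpos s) (hPpos s))
      have h2 : Real.log (P s / Q s) = -Real.log (Q s / P s) := by
        rw [← Real.log_inv]
        congr 1
        rw [inv_div]
      have h3 : P s * (Q s / P s) = Q s := by
        rw [mul_comm, div_mul_cancel₀ _ (hPpos s).ne']
      rw [h2]
      nlinarith [mul_le_mul_of_nonneg_left h1 (hPpos s).le]
    have : (0:ℝ) = ∑ s, (P s - Q s) := by
      rw [Finset.sum_sub_distrib, sumP, sumQ]; ring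
    calc (0:ℝ) = ∑ s, (P s - Q s) := this
      _ ≤ ∑ s, P s * Real.log (P s / Q s) := Finset.sum_le_sum fun s _ => key s
      _ = KL P Q := rfl
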